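/- Let m, n, ℓ be positive integers, ε, η nonnegative integers with max(ε,η) > 0, and let S(λ) be the block Kronecker pencil built from A ∈ F^{ℓ×ℓ}, B ∈ F^{ℓ×n}, C ∈ F^{m×ℓ} and the (η+1)m×(ε+1)n pencil M(λ) as in the context. Then max(1, ‖A‖₂, ‖B‖₂, ‖C‖₂, ‖M(λ)‖₂) ≤ ‖S(λ)‖₂ and ‖S(λ)‖₂ ≤ √2 + ‖[[M(λ), K̂₂ᵀC],[BK̂₁, A]]‖₂ ≤ √2 + (‖A‖_F² + ‖B‖_F² + ‖C‖_F² + ‖M(λ)‖_F²)^{1/2}, where [[M(λ), K̂₂ᵀC],[BK̂₁, A]] denotes the 2×2 block pencil whose constant term contains A and whose λ-coefficient is that of M(λ) in the (1,1) block and zero elsewhere. -/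

import Mathlib

/-! The spectral norm `specNorm` is Mathlib's L2 operator norm on matrices, so a submatrix never
has larger norm than the whole matrix. Every block of `S(λ)` carrying `A`, `B`, `C`, `M(λ)` or `I_ℓ`
is a submatrix of one of the two coefficients of `S(λ)`, which gives the lower bound.

For the upper bound, each coefficient of `S(λ)` is the zero-padded coefficient of
`[[M(λ), K̂₂ᵀC], [BK̂₁, A]]` plus a block-permuted direct sum of the matrices `E_k ⊗ I`, `F_k ⊗ I`
(and `I_ℓ`). These are row or column selections of an identity matrix, hence of norm at most `1`,
and Minkowski's inequality in `ℝ²` turns the two `+ 1`s into `√2`. The last inequality holds because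
the spectral norm is at most the Frobenius norm, whose square is additive over blocks. -/

open Matrix
open scoped Kronecker

noncomputable section

/-- The `k × (k+1)` matrix `E_k = [I_k 0]`. -/
def Ek (𝕜 : Type*) [RCLike 𝕜] (k : ℕ) : Matrix (Fin k) (Fin (k+1)) 𝕜 :=
  Matrix.of fun i j => if (j : ℕ) = (i : ℕ) then 1 else 0

/-- The `k × (k+1)` matrix `F_k = [0 I_k]`. -/
def Fk (𝕜 : Type*) [RCLike 𝕜] (k : ℕ) : Matrix (Fin k) (Fin (k+1)) 𝕜 :=
  Matrix.of fun i j => if (j : ℕ) = (i : ℕ) + 1 then 1 else 0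

/-- The standard unit vector `(0, …, 0, 1)ᵀ` of size `k+1`. -/
def evec (𝕜 : Type*) [RCLike 𝕜] (k : ℕ) : Fin (k+1) → 𝕜 :=
  fun i => if (i : ℕ) = k then 1 else 0

variable {𝕜 : Type*} [RCLike 𝕜]

/-- Frobenius norm of a matrix. -/
def frobNorm {p q : Type*} [Fintype p] [Fintype q] (M : Matrix p q 𝕜) : ℝ :=
  Real.sqrt (∑ i, ∑ j, ‖M i j‖ ^ 2)

/-- Spectral norm (largest singular value) of a matrix. -/
def specNorm {p q : Type*} [Fintype p] [Fintype q] [DecidableEq p] (M : Matrix p q 𝕜) : ℝ :=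
  Real.sqrt (⨆ i, (Matrix.isHermitian_mul_conjTranspose_self M).eigenvalues i)

/-- Smallest singular value of a `p × q` matrix with `p ≤ q`
(the `p`-th largest singular value). -/
def sigmaMin {p q : Type*} [Fintype p] [Fintype q] [DecidableEq p] (M : Matrix p q 𝕜) : ℝ :=
  Real.sqrt (⨅ i, (Matrix.isHermitian_mul_conjTranspose_self M).eigenvalues i)

/-- Euclidean norm of a vector. -/
def vecNorm {q : Type*} [Fintype q] (x : q → 𝕜) : ℝ :=
  Real.sqrt (∑ i, ‖x i‖ ^ 2)

/-- Frobenius norm of the pencil `P.1 - λ • P.2`. -/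
def pFrob {p q : Type*} [Fintype p] [Fintype q] (P : Matrix p q 𝕜 × Matrix p q 𝕜) : ℝ :=
  Real.sqrt (frobNorm P.1 ^ 2 + frobNorm P.2 ^ 2)

/-- Spectral norm of the pencil `P.1 - λ • P.2`. -/
def pSpec {p q : Type*} [Fintype p] [Fintype q] [DecidableEq p]
    (P : Matrix p q 𝕜 × Matrix p q 𝕜) : ℝ :=
  Real.sqrt (specNorm P.1 ^ 2 + specNorm P.2 ^ 2)

/-- A 3×3 block matrix. -/
def blocks3 {R1 R2 R3 C1 C2 C3 : Type*}
    (M11 : Matrix R1 C1 𝕜) (M12 : Matrix R1 C2 𝕜) (M13 : Matrix R1 C3 𝕜)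
    (M21 : Matrix R2 C1 𝕜) (M22 : Matrix R2 C2 𝕜) (M23 : Matrix R2 C3 𝕜)
    (M31 : Matrix R3 C1 𝕜) (M32 : Matrix R3 C2 𝕜) (M33 : Matrix R3 C3 𝕜) :
    Matrix (R1 ⊕ (R2 ⊕ R3)) (C1 ⊕ (C2 ⊕ C3)) 𝕜 :=
  Matrix.fromBlocks M11 (Matrix.fromCols M12 M13) (Matrix.fromRows M21 M31)
    (Matrix.fromBlocks M22 M23 M32 M33)

/-- `K̂₂ᵀ C = (e_{η+1} ⊗ I_m) C`. -/
def colUnit {m ℓ : ℕ} (η : ℕ) (C : Matrix (Fin m) (Fin ℓ) 𝕜) :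
    Matrix (Fin (η+1) × Fin m) (Fin ℓ) 𝕜 :=
  Matrix.of fun i j => evec 𝕜 η i.1 * C i.2 j

/-- `B K̂₁ = B (e_{ε+1}ᵀ ⊗ I_n)`. -/
def rowUnit {n ℓ : ℕ} (ε : ℕ) (B : Matrix (Fin ℓ) (Fin n) 𝕜) :
    Matrix (Fin ℓ) (Fin (ε+1) × Fin n) 𝕜 :=
  Matrix.of fun i j => evec 𝕜 ε j.1 * B i j.2

/-- Row index type of a block Kronecker pencil. -/
abbrev SRow (m ℓ ε η n : ℕ) := (Fin (η+1) × Fin m) ⊕ (Fin ℓ ⊕ (Fin ε × Fin n))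

/-- Column index type of a block Kronecker pencil. -/
abbrev SCol (m ℓ ε η n : ℕ) := (Fin (ε+1) × Fin n) ⊕ (Fin ℓ ⊕ (Fin η × Fin m))

/-- The block Kronecker pencil
`S(λ) = [[M(λ), K̂₂ᵀC, K₂ᵀ(λ)], [BK̂₁, A-λI, 0], [K₁(λ), 0, 0]]`
represented as a pair `(Sa, Sb)` with `S(λ) = Sa - λ Sb`. -/
def blockKron (m n ℓ ε η : ℕ) (A : Matrix (Fin ℓ) (Fin ℓ) 𝕜) (B : Matrix (Fin ℓ) (Fin n) 𝕜)
    (C : Matrix (Fin m) (Fin ℓ) 𝕜)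
    (M : Matrix (Fin (η+1) × Fin m) (Fin (ε+1) × Fin n) 𝕜 ×
         Matrix (Fin (η+1) × Fin m) (Fin (ε+1) × Fin n) 𝕜) :
    Matrix (SRow m ℓ ε η n) (SCol m ℓ ε η n) 𝕜 × Matrix (SRow m ℓ ε η n) (SCol m ℓ ε η n) 𝕜 :=
  (blocks3 M.1 (colUnit η C) ((Ek 𝕜 η)ᵀ ⊗ₖ (1 : Matrix (Fin m) (Fin m) 𝕜))
      (rowUnit ε B) A 0
      (Ek 𝕜 ε ⊗ₖ (1 : Matrix (Fin n) (Fin n) 𝕜)) 0 0,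
   blocks3 M.2 0 ((Fk 𝕜 η)ᵀ ⊗ₖ (1 : Matrix (Fin m) (Fin m) 𝕜))
      0 1 0
      (Fk 𝕜 ε ⊗ₖ (1 : Matrix (Fin n) (Fin n) 𝕜)) 0 0)

/-- Row index type of the matrix `T`. -/
abbrev TRow (m ℓ ε η n : ℕ) :=
  (((Fin η × Fin m) × Fin ℓ) ⊕ ((Fin η × Fin m) × Fin ℓ)) ⊕
  (((Fin ℓ × (Fin ε × Fin n)) ⊕ (Fin ℓ × (Fin ε × Fin n))) ⊕
   (((Fin η × Fin m) × (Fin ε × Fin n)) ⊕ ((Fin η × Fin m) × (Fin ε × Fin n))))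

/-- Column index type of the matrix `T`. -/
abbrev TCol (m ℓ ε η n : ℕ) :=
  (((Fin (η+1) × Fin m) × Fin ℓ) ⊕ ((Fin η × Fin m) × Fin ℓ)) ⊕
  (((Fin ℓ × (Fin ε × Fin n)) ⊕ (Fin ℓ × (Fin (ε+1) × Fin n))) ⊕
   (((Fin (η+1) × Fin m) × (Fin ε × Fin n)) ⊕ ((Fin η × Fin m) × (Fin (ε+1) × Fin n))))

/-- The 6×6 block matrix `T`. -/
def Tmat (m n ℓ ε η : ℕ) (A : Matrix (Fin ℓ) (Fin ℓ) 𝕜) (B : Matrix (Fin ℓ) (Fin n) 𝕜)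
    (C : Matrix (Fin m) (Fin ℓ) 𝕜) : Matrix (TRow m ℓ ε η n) (TCol m ℓ ε η n) 𝕜 :=
  Matrix.fromRows
    (Matrix.fromCols
      (Matrix.fromBlocks
        ((Ek 𝕜 η ⊗ₖ (1 : Matrix (Fin m) (Fin m) 𝕜)) ⊗ₖ (1 : Matrix (Fin ℓ) (Fin ℓ) 𝕜))
        ((1 : Matrix (Fin η × Fin m) (Fin η × Fin m) 𝕜) ⊗ₖ A)
        ((Fk 𝕜 η ⊗ₖ (1 : Matrix (Fin m) (Fin m) 𝕜)) ⊗ₖ (1 : Matrix (Fin ℓ) (Fin ℓ) 𝕜))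
        ((1 : Matrix (Fin η × Fin m) (Fin η × Fin m) 𝕜) ⊗ₖ (1 : Matrix (Fin ℓ) (Fin ℓ) 𝕜)))
      (Matrix.fromCols 0
        (Matrix.fromBlocks 0
          ((1 : Matrix (Fin η × Fin m) (Fin η × Fin m) 𝕜) ⊗ₖ (rowUnit ε B))
          0 0)))
    (Matrix.fromRows
      (Matrix.fromCols 0
        (Matrix.fromCols
          (Matrix.fromBlocks
            (Aᵀ ⊗ₖ (1 : Matrix (Fin ε × Fin n) (Fin ε × Fin n) 𝕜))
            ((1 : Matrix (Fin ℓ) (Fin ℓ) 𝕜) ⊗ₖ (Ek 𝕜 ε ⊗ₖ (1 : Matrix (Fin n) (Fin n) 𝕜)))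
            ((1 : Matrix (Fin ℓ) (Fin ℓ) 𝕜) ⊗ₖ (1 : Matrix (Fin ε × Fin n) (Fin ε × Fin n) 𝕜))
            ((1 : Matrix (Fin ℓ) (Fin ℓ) 𝕜) ⊗ₖ (Fk 𝕜 ε ⊗ₖ (1 : Matrix (Fin n) (Fin n) 𝕜))))
          (Matrix.fromBlocks
            (Matrix.of fun (i : Fin ℓ × (Fin ε × Fin n))
                (j : (Fin (η+1) × Fin m) × (Fin ε × Fin n)) =>
              evec 𝕜 η j.1.1 * C j.1.2 i.1 * (if i.2 = j.2 then 1 else 0))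
            0 0 0)))
      (Matrix.fromCols 0
        (Matrix.fromCols 0
          (Matrix.fromBlocks
            ((Ek 𝕜 η ⊗ₖ (1 : Matrix (Fin m) (Fin m) 𝕜)) ⊗ₖ
              (1 : Matrix (Fin ε × Fin n) (Fin ε × Fin n) 𝕜))
            ((1 : Matrix (Fin η × Fin m) (Fin η × Fin m) 𝕜) ⊗ₖ
              (Ek 𝕜 ε ⊗ₖ (1 : Matrix (Fin n) (Fin n) 𝕜)))
            ((Fk 𝕜 η ⊗ₖ (1 : Matrix (Fin m) (Fin m) 𝕜)) ⊗ₖ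
              (1 : Matrix (Fin ε × Fin n) (Fin ε × Fin n) 𝕜))
            ((1 : Matrix (Fin η × Fin m) (Fin η × Fin m) 𝕜) ⊗ₖ
              (Fk 𝕜 ε ⊗ₖ (1 : Matrix (Fin n) (Fin n) 𝕜)))))))

/-- The 6×6 block matrix `ΔT` built from the blocks of the perturbation pencil. -/
def DeltaT (m n ℓ ε η : ℕ)
    (Δ12a Δ12b : Matrix (Fin (η+1) × Fin m) (Fin ℓ) 𝕜)
    (Δ13a Δ13b : Matrix (Fin (η+1) × Fin m) (Fin η × Fin m) 𝕜)
    (Δ21a Δ21b : Matrix (Fin ℓ) (Fin (ε+1) × Fin n) 𝕜)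
    (Δ22a Δ22b : Matrix (Fin ℓ) (Fin ℓ) 𝕜)
    (Δ23a Δ23b : Matrix (Fin ℓ) (Fin η × Fin m) 𝕜)
    (Δ31a Δ31b : Matrix (Fin ε × Fin n) (Fin (ε+1) × Fin n) 𝕜)
    (Δ32a Δ32b : Matrix (Fin ε × Fin n) (Fin ℓ) 𝕜) :
    Matrix (TRow m ℓ ε η n) (TCol m ℓ ε η n) 𝕜 :=
  Matrix.fromRows
    (Matrix.fromCols
      (Matrix.fromBlocks
        (Δ13aᵀ ⊗ₖ (1 : Matrix (Fin ℓ) (Fin ℓ) 𝕜))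
        ((1 : Matrix (Fin η × Fin m) (Fin η × Fin m) 𝕜) ⊗ₖ Δ22a)
        (Δ13bᵀ ⊗ₖ (1 : Matrix (Fin ℓ) (Fin ℓ) 𝕜))
        ((1 : Matrix (Fin η × Fin m) (Fin η × Fin m) 𝕜) ⊗ₖ Δ22b))
      (Matrix.fromCols 0
        (Matrix.fromBlocks 0 ((1 : Matrix (Fin η × Fin m) (Fin η × Fin m) 𝕜) ⊗ₖ Δ21a)
          0 ((1 : Matrix (Fin η × Fin m) (Fin η × Fin m) 𝕜) ⊗ₖ Δ21b))))
    (Matrix.fromRows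
      (Matrix.fromCols 0
        (Matrix.fromCols
          (Matrix.fromBlocks
            (Δ22aᵀ ⊗ₖ (1 : Matrix (Fin ε × Fin n) (Fin ε × Fin n) 𝕜))
            ((1 : Matrix (Fin ℓ) (Fin ℓ) 𝕜) ⊗ₖ Δ31a)
            (Δ22bᵀ ⊗ₖ (1 : Matrix (Fin ε × Fin n) (Fin ε × Fin n) 𝕜))
            ((1 : Matrix (Fin ℓ) (Fin ℓ) 𝕜) ⊗ₖ Δ31b))
          (Matrix.fromBlocks
            (Δ12aᵀ ⊗ₖ (1 : Matrix (Fin ε × Fin n) (Fin ε × Fin n) 𝕜)) 0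
            (Δ12bᵀ ⊗ₖ (1 : Matrix (Fin ε × Fin n) (Fin ε × Fin n) 𝕜)) 0)))
      (Matrix.fromCols
        (Matrix.fromBlocks 0 ((1 : Matrix (Fin η × Fin m) (Fin η × Fin m) 𝕜) ⊗ₖ Δ32a)
          0 ((1 : Matrix (Fin η × Fin m) (Fin η × Fin m) 𝕜) ⊗ₖ Δ32b))
        (Matrix.fromCols
          (Matrix.fromBlocks
            (Δ23aᵀ ⊗ₖ (1 : Matrix (Fin ε × Fin n) (Fin ε × Fin n) 𝕜)) 0
            (Δ23bᵀ ⊗ₖ (1 : Matrix (Fin ε × Fin n) (Fin ε × Fin n) 𝕜)) 0)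
          (Matrix.fromBlocks
            (Δ13aᵀ ⊗ₖ (1 : Matrix (Fin ε × Fin n) (Fin ε × Fin n) 𝕜))
            ((1 : Matrix (Fin η × Fin m) (Fin η × Fin m) 𝕜) ⊗ₖ Δ31a)
            (Δ13bᵀ ⊗ₖ (1 : Matrix (Fin ε × Fin n) (Fin ε × Fin n) 𝕜))
            ((1 : Matrix (Fin η × Fin m) (Fin η × Fin m) 𝕜) ⊗ₖ Δ31b)))))

/-- `(Λ_k(x) ⊗ I_m)` where `Λ_k(x) = (x^k, …, x, 1)ᵀ`. -/
def LamI (𝕜 : Type*) [RCLike 𝕜] (k m : ℕ) (x : 𝕜) :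
    Matrix (Fin (k+1) × Fin m) (Fin m) 𝕜 :=
  Matrix.of fun i j => if i.2 = j then x ^ (k - (i.1 : ℕ)) else 0

/-- `(A, B)` is controllable if the controllability matrix `[B, AB, …, A^{ℓ-1}B]`
has full rank `ℓ`. -/
def Controllable {ℓ n : ℕ} (A : Matrix (Fin ℓ) (Fin ℓ) 𝕜)
    (B : Matrix (Fin ℓ) (Fin n) 𝕜) : Prop :=
  (Matrix.of fun (i : Fin ℓ) (p : Fin ℓ × Fin n) => (A ^ (p.1 : ℕ) * B) i p.2).rank = ℓ

/-- `(A, C)` is observable if `(Aᵀ, Cᵀ)` is controllable. -/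
def Observable {ℓ m : ℕ} (A : Matrix (Fin ℓ) (Fin ℓ) 𝕜)
    (C : Matrix (Fin m) (Fin ℓ) 𝕜) : Prop :=
  Controllable Aᵀ Cᵀ

end

open scoped Matrix.Norms.L2Operator

lemma EuclideanSpace.norm_toLp_sumElim_sq {𝕜 m p : Type*} [RCLike 𝕜] [Fintype m] [Fintype p]
    (u : m → 𝕜) (v : p → 𝕜) :
    ‖WithLp.toLp 2 (Sum.elim u v)‖ ^ 2 = ‖WithLp.toLp 2 u‖ ^ 2 + ‖WithLp.toLp 2 v‖ ^ 2 := by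
  simp only [EuclideanSpace.norm_sq_eq, Fintype.sum_sum_type, Sum.elim_inl, Sum.elim_inr]

lemma Real.sqrt_add_sq_add_add_sq_le (a b c d : ℝ) :
    √((a + c) ^ 2 + (b + d) ^ 2) ≤ √(a ^ 2 + b ^ 2) + √(c ^ 2 + d ^ 2) := by
  have h (x y : ℝ) : √(x ^ 2 + y ^ 2) = ‖!₂[x, y]‖ := by
    simp [EuclideanSpace.norm_eq, Fin.sum_univ_two]
  have hsum : !₂[a + c, b + d] = !₂[a, b] + !₂[c, d] := by
    ext i; fin_cases i <;> simp
  rw [h, h, h, hsum]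
  exact norm_add_le _ _

namespace Matrix

variable {𝕜 : Type*} [RCLike 𝕜] {m n p q : Type*} [Fintype m] [Fintype n] [Fintype p]
  [Fintype q]

lemma l2_opNorm_le_of_mulVec_le [DecidableEq n] {M : Matrix m n 𝕜} {c : ℝ} (hc : 0 ≤ c)
    (h : ∀ x : n → 𝕜, ‖WithLp.toLp 2 (M *ᵥ x)‖ ≤ c * ‖WithLp.toLp 2 x‖) : ‖M‖ ≤ c := by
  rw [l2_opNorm_def]
  exact ContinuousLinearMap.opNorm_le_bound _ hc fun x => h x.ofLp

lemma norm_toLp_mulVec_sq_le [DecidableEq n] {M : Matrix m n 𝕜} {c : ℝ} (hM : ‖M‖ ≤ c)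
    (x : n → 𝕜) : ‖WithLp.toLp 2 (M *ᵥ x)‖ ^ 2 ≤ c ^ 2 * ‖WithLp.toLp 2 x‖ ^ 2 := by
  rw [← mul_pow]
  exact pow_le_pow_left₀ (norm_nonneg _)
    ((l2_opNorm_mulVec M (WithLp.toLp 2 x)).trans
      (mul_le_mul_of_nonneg_right hM (norm_nonneg _))) 2

lemma l2_opNorm_one_le [DecidableEq n] : ‖(1 : Matrix n n 𝕜)‖ ≤ 1 := by
  rcases isEmpty_or_nonempty n with hn | hn
  · simp [Subsingleton.elim (1 : Matrix n n 𝕜) 0]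
  · exact CStarRing.norm_one.le

/-- A row selection has orthonormal rows, so the C⋆-identity bounds its norm by `‖1‖`. -/
lemma l2_opNorm_one_submatrix_id_le [DecidableEq m] [DecidableEq p] {e : p → m}
    (he : Function.Injective e) : ‖(1 : Matrix m m 𝕜).submatrix e id‖ ≤ 1 := by
  have hmul : (1 : Matrix m m 𝕜).submatrix e id * ((1 : Matrix m m 𝕜).submatrix e id)ᴴ = 1 := by
    rw [conjTranspose_submatrix, conjTranspose_one,
      ← submatrix_mul _ _ _ _ _ Function.bijective_id, one_mul, submatrix_one _ he]
  have h := l2_opNorm_conjTranspose_mul_self ((1 : Matrix m m 𝕜).submatrix e id)ᴴ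
  rw [conjTranspose_conjTranspose, hmul, l2_opNorm_conjTranspose] at h
  nlinarith [l2_opNorm_one_le (𝕜 := 𝕜) (n := p), norm_nonneg ((1 : Matrix m m 𝕜).submatrix e id)]

lemma l2_opNorm_submatrix_le [DecidableEq m] [DecidableEq n] [DecidableEq p] [DecidableEq q]
    (M : Matrix m n 𝕜) {r : p → m} {c : q → n} (hr : Function.Injective r)
    (hc : Function.Injective c) : ‖M.submatrix r c‖ ≤ ‖M‖ := by
  have h : M.submatrix r c
      = (1 : Matrix m m 𝕜).submatrix r id * M * ((1 : Matrix n n 𝕜).submatrix c id)ᴴ := by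
    ext i j; simp [mul_apply, one_apply]
  rw [h]
  calc _ ≤ ‖(1 : Matrix m m 𝕜).submatrix r id‖ * ‖M‖ * ‖((1 : Matrix n n 𝕜).submatrix c id)ᴴ‖ :=
        (l2_opNorm_mul _ _).trans (mul_le_mul_of_nonneg_right (l2_opNorm_mul _ _) (norm_nonneg _))
    _ ≤ 1 * ‖M‖ * 1 := by
        rw [l2_opNorm_conjTranspose]
        gcongr
        · exact l2_opNorm_one_submatrix_id_le hr
        · exact l2_opNorm_one_submatrix_id_le hc
    _ = ‖M‖ := by ring

lemma l2_opNorm_le_of_submatrix_eq [DecidableEq m] [DecidableEq n] [DecidableEq p]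
    [DecidableEq q] {M : Matrix m n 𝕜} {N : Matrix p q 𝕜} {r : p → m} {c : q → n}
    (hr : Function.Injective r) (hc : Function.Injective c) (h : M.submatrix r c = N) :
    ‖N‖ ≤ ‖M‖ :=
  h ▸ l2_opNorm_submatrix_le M hr hc

lemma l2_opNorm_one_submatrix_le [DecidableEq m] [DecidableEq p] [DecidableEq q] {r : p → m}
    {c : q → m} (hr : Function.Injective r) (hc : Function.Injective c) :
    ‖(1 : Matrix m m 𝕜).submatrix r c‖ ≤ 1 :=
  (l2_opNorm_submatrix_le 1 hr hc).trans l2_opNorm_one_le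

lemma l2_opNorm_fromBlocks_zero_le [DecidableEq n] [DecidableEq q] (A : Matrix m n 𝕜)
    (D : Matrix p q 𝕜) : ‖fromBlocks A 0 0 D‖ ≤ max ‖A‖ ‖D‖ := by
  refine l2_opNorm_le_of_mulVec_le (le_max_of_le_left (norm_nonneg A)) fun x => ?_
  rw [← Sum.elim_comp_inl_inr x, fromBlocks_mulVec]
  simp only [Sum.elim_comp_inl, Sum.elim_comp_inr, zero_mulVec, add_zero, zero_add]
  refine le_of_sq_le_sq ?_ (by positivity)
  rw [mul_pow, EuclideanSpace.norm_toLp_sumElim_sq, EuclideanSpace.norm_toLp_sumElim_sq, mul_add]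
  exact add_le_add (norm_toLp_mulVec_sq_le (le_max_left _ _) _)
    (norm_toLp_mulVec_sq_le (le_max_right _ _) _)

lemma IsHermitian.l2_opNorm_eq [DecidableEq m] {H : Matrix m m 𝕜} (hH : H.IsHermitian) :
    ‖H‖ = ‖(RCLike.ofReal ∘ hH.eigenvalues : m → 𝕜)‖ := by
  conv_lhs => rw [hH.spectral_theorem, Unitary.conjStarAlgAut_apply, ← Unitary.coe_star,
    CStarRing.norm_mul_coe_unitary, CStarRing.norm_coe_unitary_mul, l2_opNorm_diagonal]

end Matrix

open Matrix

lemma pi_norm_ofReal_comp_of_nonneg {𝕜 ι : Type*} [RCLike 𝕜] [Fintype ι] {f : ι → ℝ}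
    (hf : ∀ i, 0 ≤ f i) : ‖(RCLike.ofReal ∘ f : ι → 𝕜)‖ = ⨆ i, f i := by
  refine le_antisymm ((pi_norm_le_iff_of_nonneg (Real.iSup_nonneg hf)).2 fun i => ?_) ?_
  · simpa [abs_of_nonneg (hf i)] using le_ciSup (Finite.bddAbove_range f) i
  · rcases isEmpty_or_nonempty ι with h | h
    · simp
    · exact ciSup_le fun i => by
        simpa [abs_of_nonneg (hf i)] using norm_le_pi_norm (RCLike.ofReal ∘ f : ι → 𝕜) i

section SpectralNorm

variable {𝕜 : Type*} [RCLike 𝕜] {p q : Type*} [Fintype p] [Fintype q] [DecidableEq p]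
  [DecidableEq q]

/-- `specNorm` is the L2 operator norm: `‖M Mᴴ‖ = ‖M‖²`, and the norm of the positive
semidefinite matrix `M Mᴴ` is its largest eigenvalue. -/
theorem specNorm_eq_l2_opNorm (M : Matrix p q 𝕜) : specNorm M = ‖M‖ := by
  have hH := isHermitian_mul_conjTranspose_self M
  have hsq : ‖M * Mᴴ‖ = ‖M‖ ^ 2 := by
    simpa [sq, l2_opNorm_conjTranspose] using l2_opNorm_conjTranspose_mul_self Mᴴ
  rw [specNorm, ← pi_norm_ofReal_comp_of_nonneg (𝕜 := 𝕜)
    (eigenvalues_self_mul_conjTranspose_nonneg M), ← hH.l2_opNorm_eq, hsq,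
    Real.sqrt_sq (norm_nonneg _)]

lemma pSpec_eq (P : Matrix p q 𝕜 × Matrix p q 𝕜) : pSpec P = √(‖P.1‖ ^ 2 + ‖P.2‖ ^ 2) := by
  simp only [pSpec, specNorm_eq_l2_opNorm]

end SpectralNorm

section FrobeniusNorm

variable {𝕜 : Type*} [RCLike 𝕜] {p q : Type*} [Fintype p] [Fintype q]

lemma frobNorm_sq (M : Matrix p q 𝕜) : frobNorm M ^ 2 = ∑ i, ∑ j, ‖M i j‖ ^ 2 := by
  rw [frobNorm, Real.sq_sqrt (by positivity)]

lemma l2_opNorm_le_frobNorm [DecidableEq q] (M : Matrix p q 𝕜) : ‖M‖ ≤ frobNorm M := by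
  refine l2_opNorm_le_of_mulVec_le (Real.sqrt_nonneg _) fun x => ?_
  refine le_of_sq_le_sq ?_ (mul_nonneg (Real.sqrt_nonneg _) (norm_nonneg _))
  rw [mul_pow, EuclideanSpace.norm_sq_eq, EuclideanSpace.norm_sq_eq, frobNorm_sq, Finset.sum_mul]
  refine Finset.sum_le_sum fun i _ => ?_
  calc ‖(M *ᵥ x) i‖ ^ 2 ≤ (∑ j, ‖M i j‖ * ‖x j‖) ^ 2 := by
        gcongr
        simpa [mulVec, dotProduct] using norm_sum_le Finset.univ fun j => M i j * x j
    _ ≤ (∑ j, ‖M i j‖ ^ 2) * ∑ j, ‖x j‖ ^ 2 := Finset.sum_mul_sq_le_sq_mul_sq _ _ _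

lemma frobNorm_fromBlocks_sq {p' q' : Type*} [Fintype p'] [Fintype q'] (W : Matrix p q 𝕜)
    (X : Matrix p q' 𝕜) (Y : Matrix p' q 𝕜) (Z : Matrix p' q' 𝕜) :
    frobNorm (fromBlocks W X Y Z) ^ 2
      = frobNorm W ^ 2 + frobNorm X ^ 2 + frobNorm Y ^ 2 + frobNorm Z ^ 2 := by
  simp only [frobNorm_sq, Fintype.sum_sum_type, fromBlocks_apply₁₁, fromBlocks_apply₁₂,
    fromBlocks_apply₂₁, fromBlocks_apply₂₂, Finset.sum_add_distrib]
  ring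

lemma frobNorm_zero : frobNorm (0 : Matrix p q 𝕜) = 0 := by
  simp [frobNorm]

lemma evec_apply (k : ℕ) (i : Fin (k + 1)) : evec 𝕜 k i = if i = Fin.last k then 1 else 0 := by
  simp [evec, Fin.ext_iff]

lemma frobNorm_colUnit {m ℓ : ℕ} (η : ℕ) (C : Matrix (Fin m) (Fin ℓ) 𝕜) :
    frobNorm (colUnit η C) = frobNorm C := by
  simp [frobNorm, Fintype.sum_prod_type, colUnit, evec_apply, apply_ite]

lemma frobNorm_rowUnit {n ℓ : ℕ} (ε : ℕ) (B : Matrix (Fin ℓ) (Fin n) 𝕜) :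
    frobNorm (rowUnit ε B) = frobNorm B := by
  simp [frobNorm, Fintype.sum_prod_type, rowUnit, evec_apply, apply_ite]

end FrobeniusNorm

section Blocks3

variable {𝕜 : Type*} [RCLike 𝕜] {R₁ R₂ R₃ C₁ C₂ C₃ : Type*} [Fintype R₁] [Fintype R₂]
  [Fintype R₃] [Fintype C₁] [Fintype C₂] [Fintype C₃] [DecidableEq R₁] [DecidableEq R₂]
  [DecidableEq R₃] [DecidableEq C₁] [DecidableEq C₂] [DecidableEq C₃]

lemma l2_opNorm_blocks3_pad_le (W : Matrix R₁ C₁ 𝕜) (X : Matrix R₁ C₂ 𝕜) (Y : Matrix R₂ C₁ 𝕜)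
    (Z : Matrix R₂ C₂ 𝕜) :
    ‖blocks3 W X 0 Y Z 0 0 0 (0 : Matrix R₃ C₃ 𝕜)‖ ≤ ‖fromBlocks W X Y Z‖ := by
  have h : blocks3 W X 0 Y Z 0 0 0 (0 : Matrix R₃ C₃ 𝕜)
      = (fromBlocks (fromBlocks W X Y Z) 0 0 (0 : Matrix R₃ C₃ 𝕜)).submatrix
          (Equiv.sumAssoc R₁ R₂ R₃).symm (Equiv.sumAssoc C₁ C₂ C₃).symm := by
    ext (i | i | i) (j | j | j) <;> rfl
  rw [h]
  refine (l2_opNorm_submatrix_le _ (Equiv.injective _) (Equiv.injective _)).trans ?_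
  simpa using l2_opNorm_fromBlocks_zero_le (fromBlocks W X Y Z) (0 : Matrix R₃ C₃ 𝕜)

lemma l2_opNorm_blocks3_antidiag_le (P : Matrix R₁ C₃ 𝕜) (R : Matrix R₂ C₂ 𝕜)
    (Q : Matrix R₃ C₁ 𝕜) : ‖blocks3 0 0 P 0 R 0 Q 0 0‖ ≤ max ‖P‖ (max ‖Q‖ ‖R‖) := by
  have h : blocks3 0 0 P 0 R 0 Q 0 0
      = (fromBlocks P 0 0 (fromBlocks Q 0 0 R)).submatrix
          (Equiv.sumCongr (Equiv.refl R₁) (Equiv.sumComm R₂ R₃))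
          ((Equiv.sumAssoc C₁ C₂ C₃).symm.trans (Equiv.sumComm _ C₃)) := by
    ext (i | i | i) (j | j | j) <;> rfl
  rw [h]
  refine (l2_opNorm_submatrix_le _ (Equiv.injective _) (Equiv.injective _)).trans ?_
  exact (l2_opNorm_fromBlocks_zero_le _ _).trans
    (max_le_max le_rfl (l2_opNorm_fromBlocks_zero_le _ _))

end Blocks3

section KroneckerShift

variable {𝕜 : Type*} [RCLike 𝕜] (k n : ℕ)

lemma Ek_kronecker_one : Ek 𝕜 k ⊗ₖ (1 : Matrix (Fin n) (Fin n) 𝕜)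
    = (1 : Matrix (Fin (k + 1) × Fin n) (Fin (k + 1) × Fin n) 𝕜).submatrix
        (Prod.map Fin.castSucc id) id := by
  ext ⟨i, a⟩ ⟨j, b⟩
  simp [Ek, one_apply, Prod.ext_iff, Fin.ext_iff, ← ite_and, and_comm, eq_comm]

lemma Ek_transpose_kronecker_one : (Ek 𝕜 k)ᵀ ⊗ₖ (1 : Matrix (Fin n) (Fin n) 𝕜)
    = (1 : Matrix (Fin (k + 1) × Fin n) (Fin (k + 1) × Fin n) 𝕜).submatrix
        id (Prod.map Fin.castSucc id) := by
  ext ⟨i, a⟩ ⟨j, b⟩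
  simp [Ek, one_apply, Prod.ext_iff, Fin.ext_iff, ← ite_and, and_comm]

lemma Fk_kronecker_one : Fk 𝕜 k ⊗ₖ (1 : Matrix (Fin n) (Fin n) 𝕜)
    = (1 : Matrix (Fin (k + 1) × Fin n) (Fin (k + 1) × Fin n) 𝕜).submatrix
        (Prod.map Fin.succ id) id := by
  ext ⟨i, a⟩ ⟨j, b⟩
  simp [Fk, one_apply, Prod.ext_iff, Fin.ext_iff, ← ite_and, and_comm, eq_comm]

lemma Fk_transpose_kronecker_one : (Fk 𝕜 k)ᵀ ⊗ₖ (1 : Matrix (Fin n) (Fin n) 𝕜)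
    = (1 : Matrix (Fin (k + 1) × Fin n) (Fin (k + 1) × Fin n) 𝕜).submatrix
        id (Prod.map Fin.succ id) := by
  ext ⟨i, a⟩ ⟨j, b⟩
  simp [Fk, one_apply, Prod.ext_iff, Fin.ext_iff, ← ite_and, and_comm]

end KroneckerShift

section BlockKroneckerPencil

variable {𝕜 : Type*} [RCLike 𝕜] {m n ℓ ε η : ℕ} (A : Matrix (Fin ℓ) (Fin ℓ) 𝕜)
  (B : Matrix (Fin ℓ) (Fin n) 𝕜) (C : Matrix (Fin m) (Fin ℓ) 𝕜)
  (Ma Mb : Matrix (Fin (η+1) × Fin m) (Fin (ε+1) × Fin n) 𝕜)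

/-- The pencil `[[M(λ), K̂₂ᵀC], [BK̂₁, A]]`, as the pair of its coefficients. -/
def corePencil :
    Matrix ((Fin (η+1) × Fin m) ⊕ Fin ℓ) ((Fin (ε+1) × Fin n) ⊕ Fin ℓ) 𝕜 ×
      Matrix ((Fin (η+1) × Fin m) ⊕ Fin ℓ) ((Fin (ε+1) × Fin n) ⊕ Fin ℓ) 𝕜 :=
  (fromBlocks Ma (colUnit η C) (rowUnit ε B) A, fromBlocks Mb 0 0 0)

lemma blockKron_fst_eq_add : (blockKron m n ℓ ε η A B C (Ma, Mb)).1
    = blocks3 Ma (colUnit η C) 0 (rowUnit ε B) A 0 0 0 0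
      + blocks3 0 0 ((Ek 𝕜 η)ᵀ ⊗ₖ (1 : Matrix (Fin m) (Fin m) 𝕜)) 0 0 0
          (Ek 𝕜 ε ⊗ₖ (1 : Matrix (Fin n) (Fin n) 𝕜)) 0 0 := by
  ext (i | i | i) (j | j | j) <;> simp [blockKron, blocks3]

lemma blockKron_snd_eq_add : (blockKron m n ℓ ε η A B C (Ma, Mb)).2
    = blocks3 Mb 0 0 0 0 0 0 0 0
      + blocks3 0 0 ((Fk 𝕜 η)ᵀ ⊗ₖ (1 : Matrix (Fin m) (Fin m) 𝕜)) 0 1 0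
          (Fk 𝕜 ε ⊗ₖ (1 : Matrix (Fin n) (Fin n) 𝕜)) 0 0 := by
  ext (i | i | i) (j | j | j) <;> simp [blockKron, blocks3]

lemma l2_opNorm_blockKron_fst_le :
    ‖(blockKron m n ℓ ε η A B C (Ma, Mb)).1‖
      ≤ ‖(corePencil A B C Ma Mb).1‖ + 1 := by
  rw [blockKron_fst_eq_add]
  refine (norm_add_le _ _).trans (add_le_add (l2_opNorm_blocks3_pad_le _ _ _ _) ?_)
  refine (l2_opNorm_blocks3_antidiag_le _ _ _).trans (max_le ?_ (max_le ?_ (by simp)))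
  · rw [Ek_transpose_kronecker_one]
    exact l2_opNorm_one_submatrix_le Function.injective_id
      ((Fin.castSucc_injective _).prodMap Function.injective_id)
  · rw [Ek_kronecker_one]
    exact l2_opNorm_one_submatrix_le ((Fin.castSucc_injective _).prodMap Function.injective_id)
      Function.injective_id

lemma l2_opNorm_blockKron_snd_le :
    ‖(blockKron m n ℓ ε η A B C (Ma, Mb)).2‖
      ≤ ‖(corePencil A B C Ma Mb).2‖ + 1 := by
  rw [blockKron_snd_eq_add]
  refine (norm_add_le _ _).trans (add_le_add (l2_opNorm_blocks3_pad_le _ _ _ _) ?_)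
  refine (l2_opNorm_blocks3_antidiag_le _ _ _).trans (max_le ?_ (max_le ?_ l2_opNorm_one_le))
  · rw [Fk_transpose_kronecker_one]
    exact l2_opNorm_one_submatrix_le Function.injective_id
      ((Fin.succ_injective _).prodMap Function.injective_id)
  · rw [Fk_kronecker_one]
    exact l2_opNorm_one_submatrix_le ((Fin.succ_injective _).prodMap Function.injective_id)
      Function.injective_id

lemma le_pSpec_blockKron (hℓ : 0 < ℓ) :
    max (max 1 (specNorm A)) (max (specNorm B) (max (specNorm C) (pSpec (Ma, Mb))))
      ≤ pSpec (blockKron m n ℓ ε η A B C (Ma, Mb)) := by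
  set S := blockKron m n ℓ ε η A B C (Ma, Mb) with hS
  simp only [pSpec_eq, specNorm_eq_l2_opNorm]
  have hinrl {α β γ : Type} : Function.Injective (Sum.inr ∘ Sum.inl : α → γ ⊕ (α ⊕ β)) :=
    Sum.inr_injective.comp Sum.inl_injective
  have hlast (k : ℕ) {α β : Type} :
      Function.Injective (Sum.inl ∘ Prod.mk (Fin.last k) : α → (Fin (k + 1) × α) ⊕ β) :=
    Sum.inl_injective.comp (Prod.mk_right_injective _)
  have hS₁ : ‖S.1‖ ≤ √(‖S.1‖ ^ 2 + ‖S.2‖ ^ 2) :=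
    Real.le_sqrt_of_sq_le (le_add_of_nonneg_right (sq_nonneg _))
  have hS₂ : ‖S.2‖ ≤ √(‖S.1‖ ^ 2 + ‖S.2‖ ^ 2) :=
    Real.le_sqrt_of_sq_le (le_add_of_nonneg_left (sq_nonneg _))
  have h1 : 1 ≤ ‖S.2‖ := by
    have : Nonempty (Fin ℓ) := ⟨⟨0, hℓ⟩⟩
    calc (1 : ℝ) = ‖(1 : Matrix (Fin ℓ) (Fin ℓ) 𝕜)‖ := CStarRing.norm_one.symm
      _ ≤ ‖S.2‖ := l2_opNorm_le_of_submatrix_eq hinrl hinrl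
        (by ext; simp [hS, blockKron, blocks3, one_apply])
  have hA : ‖A‖ ≤ ‖S.1‖ :=
    l2_opNorm_le_of_submatrix_eq hinrl hinrl (by ext; simp [hS, blockKron, blocks3])
  have hB : ‖B‖ ≤ ‖S.1‖ := l2_opNorm_le_of_submatrix_eq hinrl (hlast ε)
    (by ext; simp [hS, blockKron, blocks3, rowUnit, evec])
  have hC : ‖C‖ ≤ ‖S.1‖ := l2_opNorm_le_of_submatrix_eq (hlast η) hinrl
    (by ext; simp [hS, blockKron, blocks3, colUnit, evec])
  have hMa : ‖Ma‖ ≤ ‖S.1‖ := l2_opNorm_le_of_submatrix_eq Sum.inl_injective Sum.inl_injective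
    (by ext; simp [hS, blockKron, blocks3])
  have hMb : ‖Mb‖ ≤ ‖S.2‖ := l2_opNorm_le_of_submatrix_eq Sum.inl_injective Sum.inl_injective
    (by ext; simp [hS, blockKron, blocks3])
  have hM : √(‖Ma‖ ^ 2 + ‖Mb‖ ^ 2) ≤ √(‖S.1‖ ^ 2 + ‖S.2‖ ^ 2) := by gcongr
  exact max_le (max_le (h1.trans hS₂) (hA.trans hS₁))
    (max_le (hB.trans hS₁) (max_le (hC.trans hS₁) hM))

lemma pSpec_blockKron_le :
    pSpec (blockKron m n ℓ ε η A B C (Ma, Mb)) ≤ √2 + pSpec (corePencil A B C Ma Mb) := by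
  simp only [pSpec_eq]
  calc _ ≤ √((‖(corePencil A B C Ma Mb).1‖ + 1) ^ 2
        + (‖(corePencil A B C Ma Mb).2‖ + 1) ^ 2) := by
        gcongr
        · exact l2_opNorm_blockKron_fst_le A B C Ma Mb
        · exact l2_opNorm_blockKron_snd_le A B C Ma Mb
    _ ≤ _ + √(1 ^ 2 + 1 ^ 2) := Real.sqrt_add_sq_add_add_sq_le _ _ _ _
    _ = _ := by norm_num [add_comm]

lemma pSpec_corePencil_le_sqrt_frobNorm :
    pSpec (corePencil A B C Ma Mb)
      ≤ √(frobNorm A ^ 2 + frobNorm B ^ 2 + frobNorm C ^ 2 + pFrob (Ma, Mb) ^ 2) := by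
  rw [pSpec_eq, pFrob, Real.sq_sqrt (by positivity)]
  calc _ ≤ √(frobNorm (corePencil A B C Ma Mb).1 ^ 2
        + frobNorm (corePencil A B C Ma Mb).2 ^ 2) := by
        gcongr <;> exact l2_opNorm_le_frobNorm _
    _ = _ := by
        rw [corePencil, frobNorm_fromBlocks_sq, frobNorm_fromBlocks_sq, frobNorm_colUnit,
          frobNorm_rowUnit]
        simp only [frobNorm_zero]
        ring_nf

end BlockKroneckerPencil

theorem statement17_general {𝕜 : Type*} [RCLike 𝕜] (m n ℓ ε η : ℕ)
    (hℓ : 0 < ℓ)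
    (A : Matrix (Fin ℓ) (Fin ℓ) 𝕜) (B : Matrix (Fin ℓ) (Fin n) 𝕜) (C : Matrix (Fin m) (Fin ℓ) 𝕜)
    (Ma Mb : Matrix (Fin (η+1) × Fin m) (Fin (ε+1) × Fin n) 𝕜)
    (S : Matrix (SRow m ℓ ε η n) (SCol m ℓ ε η n) 𝕜 ×
         Matrix (SRow m ℓ ε η n) (SCol m ℓ ε η n) 𝕜)
    (hS : S = blockKron m n ℓ ε η A B C (Ma, Mb)) :
    max (max 1 (specNorm A)) (max (specNorm B) (max (specNorm C) (pSpec (Ma, Mb)))) ≤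
      pSpec S ∧
    pSpec S ≤ Real.sqrt 2 +
      pSpec (Matrix.fromBlocks Ma (colUnit η C) (rowUnit ε B) A,
             (Matrix.fromBlocks Mb 0 0 0 :
               Matrix ((Fin (η+1) × Fin m) ⊕ Fin ℓ) ((Fin (ε+1) × Fin n) ⊕ Fin ℓ) 𝕜)) ∧
    pSpec (Matrix.fromBlocks Ma (colUnit η C) (rowUnit ε B) A,
           (Matrix.fromBlocks Mb 0 0 0 :
             Matrix ((Fin (η+1) × Fin m) ⊕ Fin ℓ) ((Fin (ε+1) × Fin n) ⊕ Fin ℓ) 𝕜)) ≤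
      Real.sqrt (frobNorm A ^ 2 + frobNorm B ^ 2 + frobNorm C ^ 2 + pFrob (Ma, Mb) ^ 2) := by
  subst hS
  exact ⟨le_pSpec_blockKron A B C Ma Mb hℓ, pSpec_blockKron_le A B C Ma Mb,
    pSpec_corePencil_le_sqrt_frobNorm A B C Ma Mb⟩

/-- Lemma 4.16. Bounds on the spectral norm of a block Kronecker pencil. -/
theorem statement17 {𝕜 : Type*} [RCLike 𝕜] (m n ℓ ε η : ℕ)
    (hm : 0 < m) (hn : 0 < n) (hℓ : 0 < ℓ) (hmax : 0 < max ε η)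
    (A : Matrix (Fin ℓ) (Fin ℓ) 𝕜) (B : Matrix (Fin ℓ) (Fin n) 𝕜) (C : Matrix (Fin m) (Fin ℓ) 𝕜)
    (Ma Mb : Matrix (Fin (η+1) × Fin m) (Fin (ε+1) × Fin n) 𝕜)
    (S : Matrix (SRow m ℓ ε η n) (SCol m ℓ ε η n) 𝕜 ×
         Matrix (SRow m ℓ ε η n) (SCol m ℓ ε η n) 𝕜)
    (hS : S = blockKron m n ℓ ε η A B C (Ma, Mb)) :
    max (max 1 (specNorm A)) (max (specNorm B) (max (specNorm C) (pSpec (Ma, Mb)))) ≤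
      pSpec S ∧
    pSpec S ≤ Real.sqrt 2 +
      pSpec (Matrix.fromBlocks Ma (colUnit η C) (rowUnit ε B) A,
             (Matrix.fromBlocks Mb 0 0 0 :
               Matrix ((Fin (η+1) × Fin m) ⊕ Fin ℓ) ((Fin (ε+1) × Fin n) ⊕ Fin ℓ) 𝕜)) ∧
    pSpec (Matrix.fromBlocks Ma (colUnit η C) (rowUnit ε B) A,
           (Matrix.fromBlocks Mb 0 0 0 :
             Matrix ((Fin (η+1) × Fin m) ⊕ Fin ℓ) ((Fin (ε+1) × Fin n) ⊕ Fin ℓ) 𝕜)) ≤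
      Real.sqrt (frobNorm A ^ 2 + frobNorm B ^ 2 + frobNorm C ^ 2 + pFrob (Ma, Mb) ^ 2) :=
  statement17_general m n ℓ ε η hℓ A B C Ma Mb S hS
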